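/- A finite set X of linear λ-terms is erasable if and only if every term in X is closed. -/

import Mathlib

/-!
Core development: untyped λ-terms in de Bruijn representation, linearity,
β- and η-reduction, as in the paper "A type-assignment of linear erasure
and duplication" (Curzi, Roversi).
-/

namespace LEMPaper

/-- Untyped λ-terms, de Bruijn representation. -/
inductive Lam : Type
  | var : ℕ → Lam
  | app : Lam → Lam → Lam
  | lam : Lam → Lam
  deriving DecidableEq

namespace Lam

/-- Lift a renaming under a binder. -/
def liftRen (ρ : ℕ → ℕ) : ℕ → ℕ
  | 0 => 0
  | n + 1 => ρ n + 1

/-- Apply a renaming of free variables. -/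
def rename (ρ : ℕ → ℕ) : Lam → Lam
  | var n => var (ρ n)
  | app M N => app (M.rename ρ) (N.rename ρ)
  | lam M => lam (M.rename (liftRen ρ))

/-- Shift all free variables up by one. -/
def shift (M : Lam) : Lam := M.rename Nat.succ

/-- Lift a simultaneous substitution under a binder. -/
def liftSub (s : ℕ → Lam) : ℕ → Lam
  | 0 => var 0
  | n + 1 => (s n).shift

/-- Simultaneous (capture-avoiding) substitution. -/
def substAll (s : ℕ → Lam) : Lam → Lam
  | var n => s n
  | app M N => app (M.substAll s) (N.substAll s)
  | lam M => lam (M.substAll (liftSub s))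

/-- Capture-avoiding substitution `M[N/n]`; the variables above `n` are decremented. -/
def subst (M : Lam) (n : ℕ) (N : Lam) : Lam :=
  M.substAll (fun m => if m < n then var m else if m = n then N else var (m - 1))

/-- Number of (free) occurrences of the variable `n` in a term. -/
def countFree : Lam → ℕ → ℕ
  | var m, n => if m = n then 1 else 0
  | app M N, n => M.countFree n + N.countFree n
  | lam M, n => M.countFree (n + 1)

/-- A term is closed when it has no free variables. -/
def Closed (M : Lam) : Prop := ∀ n, M.countFree n = 0

/-- A λ-term is linear if all of its free variables occur exactly once in it and
every abstraction binds a variable occurring exactly once in its (linear) body. -/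
def Linear : Lam → Prop
  | var _ => True
  | app M N => M.Linear ∧ N.Linear ∧ ∀ n, M.countFree n = 0 ∨ N.countFree n = 0
  | lam M => M.Linear ∧ M.countFree 0 = 1

/-- The identity combinator `I = λx.x`. -/
def I : Lam := lam (var 0)

/-- The linear pairing `⟨M,N⟩ = λz. z M N`. -/
def pair (M N : Lam) : Lam := lam (app (app (var 0) M.shift) N.shift)

/-- The size (number of nodes of the syntax tree) of a term. -/
def size : Lam → ℕ
  | var _ => 1
  | app M N => M.size + N.size + 1
  | lam M => M.size + 1

/-- One-step β-reduction, closed under arbitrary contexts. -/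
inductive Beta : Lam → Lam → Prop
  | beta (M N : Lam) : Beta (app (lam M) N) (M.subst 0 N)
  | appL {M M'} (N : Lam) : Beta M M' → Beta (app M N) (app M' N)
  | appR (M : Lam) {N N'} : Beta N N' → Beta (app M N) (app M N')
  | lam {M M'} : Beta M M' → Beta (lam M) (lam M')

/-- One-step η-reduction `λx.Mx →η M` (x not free in M), closed under contexts. -/
inductive Eta : Lam → Lam → Prop
  | eta (M : Lam) : Eta (lam (app M.shift (var 0))) M
  | appL {M M'} (N : Lam) : Eta M M' → Eta (app M N) (app M' N)
  | appR (M : Lam) {N N'} : Eta N N' → Eta (app M N) (app M N')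
  | lam {M M'} : Eta M M' → Eta (lam M) (lam M')

/-- One-step βη-reduction. -/
def BetaEta (M N : Lam) : Prop := Beta M N ∨ Eta M N

/-- A value is a closed linear λ-term in β-normal form. -/
def IsValue (V : Lam) : Prop := V.Linear ∧ V.Closed ∧ ∀ W, ¬ Beta V W

end Lam

end LEMPaper

namespace LEMPaper

/-- A set `X` of linear λ-terms is *erasable* if there is a linear λ-term `E`
(an eraser of `X`) such that `E M →βη* I` for every `M ∈ X`. -/
def Erasable (X : Set Lam) : Prop :=
  ∃ E : Lam, E.Linear ∧ ∀ M ∈ X, Relation.ReflTransGen Lam.BetaEta (Lam.app E M) Lam.I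

/-!
Call a term weakly linear when each of its abstractions binds exactly one occurrence. On such
terms a β-step `(λx.A) N → A[N/x]` copies `N` exactly once, so βη-reduction preserves the
number of free occurrences of every variable; as `I` is closed, `E M →βη* I` forces `M` to be
closed.

Conversely, a closed weakly linear `M` satisfies `M I ⋯ I →β* I` for enough copies of `I`.
Reduce `M` until it is β-normal; being closed it is then an abstraction `λx.B`, and unless it is
`I` itself, apply it to `I`. Every β-step shrinks the term, and the step `(λx.B) I → B[I/x]` keeps
its size while lowering the number of variable occurrences lying outside copies of `I`. Since
`I I →β I`, surplus copies of `I` do no harm, so `λx. x I ⋯ I` with enough copies erases any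
finite set of closed linear terms.
-/

namespace Lam

local infix:50 " ↠ " => Relation.ReflTransGen BetaEta

open Function

def WeaklyLinear : Lam → Prop
  | var _ => True
  | app M N => M.WeaklyLinear ∧ N.WeaklyLinear
  | lam M => M.WeaklyLinear ∧ M.countFree 0 = 1

theorem Linear.weaklyLinear : ∀ {M : Lam}, M.Linear → M.WeaklyLinear
  | var _, _ => trivial
  | app _ _, h => ⟨h.1.weaklyLinear, h.2.1.weaklyLinear⟩
  | lam _, h => ⟨h.1.weaklyLinear, h.2⟩

theorem closed_app_iff {M N : Lam} : (app M N).Closed ↔ M.Closed ∧ N.Closed := by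
  simp only [Closed, countFree, Nat.add_eq_zero_iff, forall_and]

theorem closed_I : I.Closed := fun n => by simp [I, countFree]

theorem weaklyLinear_I : I.WeaklyLinear := ⟨trivial, rfl⟩

theorem liftRen_injective {ρ : ℕ → ℕ} (h : ρ.Injective) : (liftRen ρ).Injective
  | 0, 0, _ => rfl
  | a + 1, b + 1, hab => congrArg (· + 1) (h (Nat.succ_injective hab))
  | 0, _ + 1, hab | _ + 1, 0, hab => absurd hab (by simp [liftRen])

theorem countFree_rename : ∀ (M : Lam) {ρ : ℕ → ℕ} {n m : ℕ},
    (∀ x, ρ x = n ↔ x = m) → (M.rename ρ).countFree n = M.countFree m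
  | var x, _, _, _, h => by simp only [rename, countFree, h]
  | app A B, _, _, _, h => by
      simp only [rename, countFree, countFree_rename A h, countFree_rename B h]
  | lam A, _, _, _, h => by
      simp only [rename, countFree]
      refine countFree_rename A fun x => ?_
      cases x <;> simp [liftRen, h]

theorem countFree_rename_eq_zero : ∀ (M : Lam) {ρ : ℕ → ℕ} {n : ℕ},
    (∀ x, ρ x ≠ n) → (M.rename ρ).countFree n = 0
  | var x, _, _, h => by simp [rename, countFree, h x]
  | app A B, _, _, h => by
      simp [rename, countFree, countFree_rename_eq_zero A h, countFree_rename_eq_zero B h]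
  | lam A, _, _, h => by
      simp only [rename, countFree]
      refine countFree_rename_eq_zero A fun x => ?_
      cases x <;> simp [liftRen, h]

theorem countFree_shift_succ (M : Lam) (n : ℕ) : M.shift.countFree (n + 1) = M.countFree n :=
  M.countFree_rename fun _ => Nat.succ_inj

theorem countFree_shift_zero (M : Lam) : M.shift.countFree 0 = 0 :=
  M.countFree_rename_eq_zero Nat.succ_ne_zero

theorem weaklyLinear_rename : ∀ (M : Lam) {ρ : ℕ → ℕ}, ρ.Injective →
    ((M.rename ρ).WeaklyLinear ↔ M.WeaklyLinear)
  | var _, _, _ => Iff.rfl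
  | app A B, _, h => by
      simp only [rename, WeaklyLinear, weaklyLinear_rename A h, weaklyLinear_rename B h]
  | lam A, ρ, h => by
      have hlift := liftRen_injective h
      simp only [rename, WeaklyLinear, weaklyLinear_rename A hlift,
        countFree_rename A (ρ := liftRen ρ) (n := 0) (m := 0) fun _ => hlift.eq_iff' rfl]

theorem weaklyLinear_shift (M : Lam) : M.shift.WeaklyLinear ↔ M.WeaklyLinear :=
  M.weaklyLinear_rename Nat.succ_injective

theorem size_rename : ∀ (M : Lam) (ρ : ℕ → ℕ), (M.rename ρ).size = M.size
  | var _, _ => rfl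
  | app A B, ρ => by simp [rename, size, size_rename A, size_rename B]
  | lam A, ρ => by simp [rename, size, size_rename A]

theorem subst_lam (M N : Lam) (k : ℕ) :
    (lam M).subst k N = lam (M.subst (k + 1) N.shift) := by
  simp only [subst, substAll]
  congr 2
  funext n
  rcases n with _ | m
  · simp [liftSub]
  · simp only [liftSub]
    split_ifs <;> first | omega | simp [shift, rename] <;> omega

theorem countFree_subst : ∀ (M : Lam) (k : ℕ) (N : Lam) (n : ℕ),
    (M.subst k N).countFree n =
      (if n < k then M.countFree n else M.countFree (n + 1)) + M.countFree k * N.countFree n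
  | var m, k, N, n => by
      simp only [subst, substAll]
      split_ifs <;> simp only [countFree] <;> split_ifs <;> omega
  | app A B, k, N, n => by
      have hA := countFree_subst A k N n
      have hB := countFree_subst B k N n
      simp only [subst, substAll, countFree] at hA hB ⊢
      rw [hA, hB]
      split_ifs <;> ring
  | lam A, k, N, n => by
      rw [subst_lam]
      simp only [countFree, countFree_subst A (k + 1) N.shift (n + 1), countFree_shift_succ,
        Nat.add_lt_add_iff_right]

theorem size_subst : ∀ (M : Lam) (k : ℕ) (N : Lam),
    (M.subst k N).size + M.countFree k = M.size + M.countFree k * N.size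
  | var m, k, N => by
      simp only [subst, substAll]
      split_ifs <;> simp only [countFree, size] <;> split_ifs <;> omega
  | app A B, k, N => by
      have hA := size_subst A k N
      have hB := size_subst B k N
      simp only [subst, substAll, size, countFree] at hA hB ⊢
      nlinarith
  | lam A, k, N => by
      have hA := size_subst A (k + 1) N.shift
      rw [show N.shift.size = N.size from N.size_rename _] at hA
      rw [subst_lam]
      simp only [size, countFree]
      omega

theorem WeaklyLinear.subst : ∀ {M : Lam} (k : ℕ) {N : Lam},
    M.WeaklyLinear → N.WeaklyLinear → (M.subst k N).WeaklyLinear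
  | var m, k, _, _, hN => by
      simp only [Lam.subst, substAll]
      split_ifs
      exacts [trivial, hN, trivial]
  | app _ _, k, _, hM, hN => ⟨hM.1.subst k hN, hM.2.subst k hN⟩
  | lam A, k, N, hM, hN => by
      rw [subst_lam]
      refine ⟨hM.1.subst (k + 1) ((weaklyLinear_shift N).2 hN), ?_⟩
      simp [countFree_subst, countFree_shift_zero, hM.2]

theorem Beta.countFree_eq {M M' : Lam} (h : Beta M M') (hw : M.WeaklyLinear) :
    M'.countFree = M.countFree := by
  induction h with
  | beta A N =>
      funext n
      simp [countFree_subst, countFree, hw.1.2]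
  | appL N _ ih => funext n; simp only [countFree, ih hw.1]
  | appR M _ ih => funext n; simp only [countFree, ih hw.2]
  | lam _ ih => funext n; simp only [countFree, ih hw.1]

theorem Beta.weaklyLinear {M M' : Lam} (h : Beta M M') (hw : M.WeaklyLinear) :
    M'.WeaklyLinear := by
  induction h with
  | beta A N => exact hw.1.1.subst 0 hw.2
  | appL N _ ih => exact ⟨ih hw.1, hw.2⟩
  | appR M _ ih => exact ⟨hw.1, ih hw.2⟩
  | lam h ih => exact ⟨ih hw.1, by rw [h.countFree_eq hw.1]; exact hw.2⟩

theorem Beta.size_lt {M M' : Lam} (h : Beta M M') (hw : M.WeaklyLinear) : M'.size < M.size := by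
  induction h with
  | beta A N =>
      have := size_subst A 0 N
      rw [hw.1.2] at this
      simp only [size]
      omega
  | appL N _ ih => have := ih hw.1; simp only [size]; omega
  | appR M _ ih => have := ih hw.2; simp only [size]; omega
  | lam _ ih => have := ih hw.1; simp only [size]; omega

theorem Eta.countFree_eq {M M' : Lam} (h : Eta M M') : M'.countFree = M.countFree := by
  induction h with
  | eta A => funext n; simp [countFree, countFree_shift_succ]
  | appL N _ ih => funext n; simp only [countFree, ih]
  | appR M _ ih => funext n; simp only [countFree, ih]
  | lam _ ih => funext n; simp only [countFree, ih]

theorem Eta.weaklyLinear {M M' : Lam} (h : Eta M M') (hw : M.WeaklyLinear) :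
    M'.WeaklyLinear := by
  induction h with
  | eta A => exact (weaklyLinear_shift A).1 hw.1.1
  | appL N _ ih => exact ⟨ih hw.1, hw.2⟩
  | appR M _ ih => exact ⟨hw.1, ih hw.2⟩
  | lam h ih => exact ⟨ih hw.1, by rw [h.countFree_eq]; exact hw.2⟩

theorem BetaEta.app_left {M M' : Lam} (h : BetaEta M M') (N : Lam) :
    BetaEta (app M N) (app M' N) :=
  Or.imp (Beta.appL N) (Eta.appL N) h

theorem WeaklyLinear.of_reflTransGen {M M' : Lam} (hw : M.WeaklyLinear) (h : M ↠ M') :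
    M'.WeaklyLinear := by
  induction h with
  | refl => exact hw
  | tail _ hstep ih => exact Or.elim hstep (·.weaklyLinear ih) (·.weaklyLinear ih)

theorem countFree_eq_of_reflTransGen {M M' : Lam} (h : M ↠ M') (hw : M.WeaklyLinear) :
    M'.countFree = M.countFree := by
  induction h with
  | refl => rfl
  | @tail N _ hMN hstep ih =>
      have hwN := hw.of_reflTransGen hMN
      exact (Or.elim hstep (·.countFree_eq hwN) Eta.countFree_eq).trans ih

theorem Closed.of_reflTransGen {M N : Lam} (h : M ↠ N) (hw : M.WeaklyLinear) (hN : N.Closed) :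
    M.Closed :=
  fun n => countFree_eq_of_reflTransGen h hw ▸ hN n

theorem Closed.exists_eq_lam_of_normal : ∀ {M : Lam}, M.Closed → (∀ M', ¬ Beta M M') →
    ∃ B, M = lam B
  | var n, hc, _ => absurd (hc n) (by simp [countFree])
  | app A B, hc, hn => by
      obtain ⟨C, rfl⟩ := (closed_app_iff.1 hc).1.exists_eq_lam_of_normal
        fun A' h => hn _ (h.appL B)
      exact absurd (Beta.beta C B) (hn _)
  | lam A, _, _ => ⟨A, rfl⟩

def applyI (M : Lam) : Lam := app M I

theorem reflTransGen_iterate_applyI {M M' : Lam} (h : M ↠ M') :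
    ∀ n, applyI^[n] M ↠ applyI^[n] M'
  | 0 => h
  | n + 1 => by
      rw [iterate_succ_apply', iterate_succ_apply']
      exact (reflTransGen_iterate_applyI h n).lift applyI fun _ _ h => h.app_left I

theorem iterate_applyI_I_reflTransGen : ∀ n, applyI^[n] I ↠ I
  | 0 => .refl
  | n + 1 => by
      rw [iterate_succ_apply]
      exact (reflTransGen_iterate_applyI (.single (Or.inl (Beta.beta (var 0) I))) n).trans
        (iterate_applyI_I_reflTransGen n)

theorem iterate_applyI_reflTransGen_I_of_le {M : Lam} {n m : ℕ} (hnm : n ≤ m)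
    (h : applyI^[n] M ↠ I) : applyI^[m] M ↠ I := by
  obtain ⟨k, rfl⟩ := Nat.exists_eq_add_of_le' hnm
  rw [iterate_add_apply]
  exact (reflTransGen_iterate_applyI h k).trans (iterate_applyI_I_reflTransGen k)

def varOccsOutsideI : Lam → ℕ
  | var _ => 1
  | app A B => A.varOccsOutsideI + B.varOccsOutsideI
  | lam A => if A = var 0 then 0 else A.varOccsOutsideI

theorem subst_succ_I_ne_var_zero {A : Lam} (hA : A ≠ var 0) (k : ℕ) :
    A.subst (k + 1) I ≠ var 0 := by
  cases A with
  | var m =>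
      simp only [subst, substAll]
      split_ifs <;> simp_all [I]
      omega
  | app A B => simp [subst, substAll]
  | lam A => simp [subst_lam]

theorem varOccsOutsideI_subst_I : ∀ (M : Lam) (k : ℕ),
    (M.subst k I).varOccsOutsideI + M.countFree k = M.varOccsOutsideI
  | var m, k => by
      simp only [subst, substAll]
      split_ifs <;> simp only [varOccsOutsideI, countFree, I] <;> split_ifs <;> simp_all
  | app A B, k => by
      have hA := varOccsOutsideI_subst_I A k
      have hB := varOccsOutsideI_subst_I B k
      simp only [subst, substAll, varOccsOutsideI, countFree] at hA hB ⊢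
      omega
  | lam A, k => by
      rw [subst_lam, show I.shift = I from rfl]
      by_cases hA : A = var 0
      · subst hA
        rfl
      · simp only [varOccsOutsideI, countFree, if_neg hA, if_neg (subst_succ_I_ne_var_zero hA k)]
        exact varOccsOutsideI_subst_I A (k + 1)

theorem exists_iterate_applyI_reflTransGen_I (M : Lam) (hw : M.WeaklyLinear) (hc : M.Closed) :
    ∃ n, applyI^[n] M ↠ I := by
  by_cases hred : ∃ M', Beta M M'
  · obtain ⟨M', hM'⟩ := hred
    have hsize := hM'.size_lt hw
    obtain ⟨n, hn⟩ := exists_iterate_applyI_reflTransGen_I M' (hM'.weaklyLinear hw)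
      fun n => (congrFun (hM'.countFree_eq hw) n).trans (hc n)
    exact ⟨n, (reflTransGen_iterate_applyI (.single (Or.inl hM')) n).trans hn⟩
  push Not at hred
  obtain ⟨B, rfl⟩ := hc.exists_eq_lam_of_normal hred
  by_cases hB : B = var 0
  · exact ⟨0, hB ▸ .refl⟩
  have hB0 : B.countFree 0 = 1 := hw.2
  have hsize : (B.subst 0 I).size = (lam B).size := by
    have := size_subst B 0 I
    simp only [hB0, size, I] at this ⊢
    omega
  have hocc : (B.subst 0 I).varOccsOutsideI < (lam B).varOccsOutsideI := by
    have := varOccsOutsideI_subst_I B 0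
    simp only [varOccsOutsideI, if_neg hB]
    omega
  have hclosed : (B.subst 0 I).Closed := fun n => by
    simpa [countFree_subst, hB0, closed_I n, countFree] using hc n
  obtain ⟨n, hn⟩ := exists_iterate_applyI_reflTransGen_I (B.subst 0 I)
    (hw.1.subst 0 weaklyLinear_I) hclosed
  refine ⟨n + 1, ?_⟩
  rw [iterate_succ_apply]
  exact (reflTransGen_iterate_applyI (.single (Or.inl (Beta.beta B I))) n).trans hn
termination_by (M.size, M.varOccsOutsideI)
decreasing_by
  · exact Prod.Lex.left _ _ hsize
  · subst_vars
    exact Prod.lex_def.2 (Or.inr ⟨hsize, hocc⟩)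

theorem eventually_iterate_applyI_reflTransGen_I {M : Lam} (hw : M.WeaklyLinear)
    (hc : M.Closed) : ∀ᶠ n in Filter.atTop, applyI^[n] M ↠ I := by
  obtain ⟨n, hn⟩ := exists_iterate_applyI_reflTransGen_I M hw hc
  exact Filter.eventually_atTop.2 ⟨n, fun _ hm => iterate_applyI_reflTransGen_I_of_le hm hn⟩

theorem Linear.applyI {M : Lam} (h : M.Linear) : M.applyI.Linear :=
  ⟨h, ⟨trivial, rfl⟩, fun n => Or.inr (closed_I n)⟩

theorem countFree_applyI (M : Lam) : M.applyI.countFree = M.countFree := by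
  funext n
  simp [applyI, countFree, closed_I n]

theorem subst_iterate_applyI (A : Lam) (k : ℕ) (N : Lam) (n : ℕ) :
    (applyI^[n] A).subst k N = applyI^[n] (A.subst k N) :=
  Semiconj.iterate_right (f := fun M : Lam => M.subst k N) (ga := applyI) (gb := applyI)
    (fun _ => rfl) n A

def eraser (n : ℕ) : Lam := lam (applyI^[n] (var 0))

theorem linear_eraser (n : ℕ) : (eraser n).Linear :=
  ⟨Iterate.rec Linear (a := var 0) trivial (fun _ => Linear.applyI) n,
    Iterate.rec (fun N : Lam => N.countFree 0 = 1) (a := var 0) rfl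
      (fun N h => (countFree_applyI N).symm ▸ h) n⟩

theorem app_eraser_reflTransGen (n : ℕ) (M : Lam) : app (eraser n) M ↠ applyI^[n] M := by
  have hstep := Beta.beta (applyI^[n] (var 0)) M
  rw [subst_iterate_applyI] at hstep
  exact .single (Or.inl hstep)

end Lam

/-- Proposition 2.1: a finite set of linear λ-terms is erasable
if and only if all of its elements are closed. -/
theorem erasable_iff_all_closed
    (X : Set Lam) (hfin : X.Finite) (hlin : ∀ M ∈ X, Lam.Linear M) :
    Erasable X ↔ ∀ M ∈ X, Lam.Closed M := by
  constructor
  · rintro ⟨E, hE, hred⟩ M hM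
    exact (Lam.closed_app_iff.1 (Lam.Closed.of_reflTransGen (hred M hM)
      ⟨hE.weaklyLinear, (hlin M hM).weaklyLinear⟩ Lam.closed_I)).2
  · intro hclosed
    obtain ⟨n, hn⟩ := (hfin.eventually_all.2 fun M hM =>
      Lam.eventually_iterate_applyI_reflTransGen_I (hlin M hM).weaklyLinear (hclosed M hM)).exists
    exact ⟨Lam.eraser n, Lam.linear_eraser n,
      fun M hM => (Lam.app_eraser_reflTransGen n M).trans (hn M hM)⟩

end LEMPaper
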